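/- arXiv:hep-lat/9708024 — 3 statements merged into one kernel-verified Lean document; each statement's English description precedes it below -/
import Mathlib

section
/- Let Δ be an L×L complex matrix all of whose entries are bounded in absolute value by a constant C (independent of L). Then |det(I + (1/L)·Δ)| ≤ C', where C' = ∑_{k=0}^∞ (C√k)^k / k! is a finite constant independent of L. -/
open scoped BigOperators

lemma pow_div_factorial_le_exp (x : ℝ) (hx : 0 ≤ x) (k : ℕ) :
    x ^ k / (k.factorial : ℝ) ≤ Real.exp x := by
  have h := Real.sum_le_exp_of_nonneg hx (k + 1)
  refine le_trans (Finset.single_le_sum (f := fun i => x ^ i / (i.factorial : ℝ))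
    (fun i _ => by positivity) (Finset.self_mem_range_succ k)) h

lemma term_le_aux (C : ℝ) (hC : 0 ≤ C) (k : ℕ) (hk : 1 ≤ k) :
    (C * Real.sqrt k) ^ k / (k.factorial : ℝ) ≤ (C * Real.exp 1 / Real.sqrt k) ^ k := by
  have hks : (0:ℝ) < Real.sqrt k := Real.sqrt_pos.2 (by exact_mod_cast hk)
  have hfac : (0:ℝ) < (k.factorial : ℝ) := by exact_mod_cast k.factorial_pos
  have hsq : (Real.sqrt k) ^ k * (Real.sqrt k) ^ k = (k:ℝ) ^ k := by
    rw [← mul_pow, Real.mul_self_sqrt (Nat.cast_nonneg k)]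
  have hkk : (k:ℝ) ^ k ≤ (k.factorial : ℝ) * Real.exp k := by
    have := pow_div_factorial_le_exp (k:ℝ) (Nat.cast_nonneg k) k
    rw [div_le_iff₀ hfac] at this
    linarith [this]
  have hek : Real.exp (k:ℝ) = (Real.exp 1) ^ k := by
    rw [← Real.exp_nat_mul, mul_one]
  rw [mul_pow, div_pow, mul_pow, div_le_div_iff₀ hfac (pow_pos hks k)]
  calc C ^ k * Real.sqrt k ^ k * Real.sqrt k ^ k = C ^ k * ((k:ℝ) ^ k) := by
        rw [mul_assoc, hsq]
    _ ≤ C ^ k * ((k.factorial : ℝ) * Real.exp k) := by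
        apply mul_le_mul_of_nonneg_left hkk (by positivity)
    _ = C ^ k * Real.exp 1 ^ k * (k.factorial : ℝ) := by rw [hek]; ring

lemma summable_term (C : ℝ) (hC : 0 ≤ C) :
    Summable (fun k : ℕ => (C * Real.sqrt k) ^ k / (k.factorial : ℝ)) := by
  set S : ℕ → ℝ := fun k => (C * Real.sqrt k) ^ k / (k.factorial : ℝ) with hS
  have hSnn : ∀ k, 0 ≤ S k := by
    intro k
    have : 0 ≤ C * Real.sqrt k := by positivity
    positivity
  set N : ℕ := ⌈(2 * C * Real.exp 1) ^ 2⌉₊ + 1 with hN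
  have key : ∀ k, N ≤ k → S k ≤ (1/2 : ℝ) ^ k := by
    intro k hk
    have hk1 : 1 ≤ k := le_trans (by omega) hk
    refine (term_le_aux C hC k hk1).trans ?_
    have hks : (0:ℝ) < Real.sqrt k := Real.sqrt_pos.2 (by exact_mod_cast hk1)
    have hbound : C * Real.exp 1 / Real.sqrt k ≤ 1/2 := by
      rw [div_le_iff₀ hks]
      have h1 : ((2 * C * Real.exp 1) ^ 2 : ℝ) ≤ (k : ℝ) := by
        calc ((2 * C * Real.exp 1) ^ 2 : ℝ) ≤ (N : ℝ) := by
              push_cast [hN]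
              have := Nat.le_ceil ((2 * C * Real.exp 1) ^ 2)
              linarith
          _ ≤ (k : ℝ) := by exact_mod_cast hk
      have h2 : (2 * C * Real.exp 1 : ℝ) ≤ Real.sqrt k := by
        rw [show (2 * C * Real.exp 1 : ℝ) = Real.sqrt ((2 * C * Real.exp 1)^2) by
          rw [Real.sqrt_sq (by positivity)]]
        exact Real.sqrt_le_sqrt h1
      nlinarith [Real.exp_pos (1:ℝ), hks]
    exact pow_le_pow_left₀ (by positivity) hbound k
  rw [← summable_nat_add_iff N]
  apply Summable.of_nonneg_of_le (fun k => hSnn _)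
    (fun k => (key (k + N) (by omega)).trans
      (pow_le_pow_of_le_one (by norm_num) (by norm_num) (Nat.le_add_right k N)))
  exact summable_geometric_of_lt_one (by norm_num) (by norm_num)

lemma det_piecewise_eq_minor (L : ℕ) (A : Matrix (Fin L) (Fin L) ℂ) (s : Finset (Fin L)) :
    Matrix.det (s.piecewise (1 : Matrix (Fin L) (Fin L) ℂ) A)
      = (A.submatrix (Subtype.val : {a : Fin L // ¬ a ∈ s} → Fin L) Subtype.val).det := by
  classical
  set B : Matrix (Fin L) (Fin L) ℂ := s.piecewise (1 : Matrix (Fin L) (Fin L) ℂ) A with hBdef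
  set e : {a : Fin L // a ∈ s} ⊕ {a : Fin L // ¬ a ∈ s} ≃ Fin L := Equiv.sumCompl (· ∈ s) with he
  have hB : B.submatrix e e = Matrix.fromBlocks 1 0
      (A.submatrix Subtype.val Subtype.val) (A.submatrix Subtype.val Subtype.val) := by
    ext i j
    cases i with
    | inl i =>
      have hBi : B (i : Fin L) = (1 : Matrix (Fin L) (Fin L) ℂ) (i : Fin L) :=
        s.piecewise_eq_of_mem _ _ i.2
      cases j with
      | inl j =>
        simp only [Matrix.submatrix_apply, he, Equiv.sumCompl_apply_inl,
          Matrix.fromBlocks_apply₁₁, hBi]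
        simp [Matrix.one_apply, Subtype.val_inj]
      | inr j =>
        have hij : (i : Fin L) ≠ (j : Fin L) := by
          intro hij
          exact j.2 (hij ▸ i.2)
        simp only [Matrix.submatrix_apply, he, Equiv.sumCompl_apply_inl,
          Equiv.sumCompl_apply_inr, Matrix.fromBlocks_apply₁₂, hBi]
        simp [Matrix.one_apply_ne hij]
    | inr i =>
      have hBi : B (i : Fin L) = A (i : Fin L) := s.piecewise_eq_of_notMem _ _ i.2
      cases j with
      | inl j =>
        simp [Matrix.submatrix_apply, he, hBi]
      | inr j =>
        simp [Matrix.submatrix_apply, he, hBi]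
  rw [← Matrix.det_submatrix_equiv_self e B, hB, Matrix.det_fromBlocks_zero₁₂,
    Matrix.det_one, one_mul]

open scoped BigOperators

lemma hadamard_succ (m : ℕ) (x : ℝ) (hx : 0 ≤ x) (M : Matrix (Fin (m+1)) (Fin (m+1)) ℂ)
    (h : ∀ i j, ‖M i j‖ ≤ x) :
    ‖M.det‖ ≤ (x * Real.sqrt (m+1)) ^ (m+1) := by
  classical
  have hdim : Module.finrank ℂ (EuclideanSpace ℂ (Fin (m+1))) = Fintype.card (Fin (m+1)) := by
    simp
  set f : Fin (m+1) → EuclideanSpace ℂ (Fin (m+1)) := fun j => WithLp.toLp 2 (fun i => M i j) with hf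
  set b := EuclideanSpace.basisFun (Fin (m+1)) ℂ with hb
  have hdet : b.toBasis.det f = M.det := by
    rw [Module.Basis.det_apply]
    have : b.toBasis.toMatrix f = M := by
      ext i j
      simp [Module.Basis.toMatrix_apply, f, b]
    rw [this]
  haveI i1 : WellFoundedLT (Fin (m+1)) := inferInstanceAs (WellFoundedLT (Fin (m+1)))
  set g := InnerProductSpace.gramSchmidtOrthonormalBasis hdim f with hg
  have hchain : b.toBasis.det f = b.toBasis.det g.toBasis * g.toBasis.det f := by
    rw [Module.Basis.det_apply, Module.Basis.det_apply, Module.Basis.det_apply,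
      ← Matrix.det_mul, Module.Basis.toMatrix_mul_toMatrix]
  have h1 : ‖b.toBasis.det g.toBasis‖ = 1 :=
    OrthonormalBasis.det_to_matrix_orthonormalBasis b g
  have h2 : g.toBasis.det f = ∏ i, (inner ℂ (g i) (f i) : ℂ) :=
    InnerProductSpace.gramSchmidtOrthonormalBasis_det hdim f
  have hnormf : ∀ i, ‖f i‖ ≤ x * Real.sqrt (m+1) := by
    intro i
    rw [EuclideanSpace.norm_eq]
    have step1 : Real.sqrt (∑ j, ‖f i j‖ ^ 2) ≤ Real.sqrt (∑ _j : Fin (m+1), x ^ 2) := by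
      apply Real.sqrt_le_sqrt
      apply Finset.sum_le_sum
      intro j _
      have h0 : (0:ℝ) ≤ ‖f i j‖ := norm_nonneg _
      apply pow_le_pow_left₀ h0 _ 2
      simpa [f] using h j i
    refine step1.trans (le_of_eq ?_)
    rw [Finset.sum_const, Finset.card_univ, Fintype.card_fin, nsmul_eq_mul,
      Real.sqrt_mul (by positivity), Real.sqrt_sq hx, mul_comm]
    push_cast
    ring
  have key : ‖M.det‖ = ‖b.toBasis.det g.toBasis‖ * ‖∏ i, (inner ℂ (g i) (f i) : ℂ)‖ := by
    rw [← hdet, hchain, h2, norm_mul]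
  rw [key, h1, one_mul, norm_prod]
  have : ∏ i, ‖(inner ℂ (g i) (f i) : ℂ)‖ ≤ ∏ _i : Fin (m+1), (x * Real.sqrt (m+1)) := by
    apply Finset.prod_le_prod
    · intro i _; exact norm_nonneg _
    · intro i _
      refine (norm_inner_le_norm _ _).trans ?_
      have hg1 : ‖g i‖ = 1 := g.orthonormal.1 i
      rw [hg1, one_mul]
      exact hnormf i
  refine this.trans (le_of_eq ?_)
  rw [Finset.prod_const, Finset.card_univ, Fintype.card_fin]


lemma hadamard_fin (n : ℕ) (x : ℝ) (hx : 0 ≤ x) (M : Matrix (Fin n) (Fin n) ℂ)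
    (h : ∀ i j, ‖M i j‖ ≤ x) :
    ‖M.det‖ ≤ (x * Real.sqrt n) ^ n := by
  rcases Nat.eq_zero_or_pos n with rfl | hn
  · simp [Matrix.det_fin_zero]
  obtain ⟨m, rfl⟩ : ∃ m, n = m + 1 := ⟨n - 1, (Nat.succ_pred_eq_of_pos hn).symm⟩
  have := hadamard_succ m x hx M h
  simpa using this

/-- Fredholm-type bound: if every entry of an `L × L` complex matrix `Δ` is
bounded by an `L`-independent constant `C`, then `|det (1 + (1/L) Δ)|` is
bounded by the `L`-independent constant `C' = ∑ₖ (C √k)^k / k!`. -/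
theorem det_one_add_inv_smul_bounded (C : ℝ) (hC : 0 ≤ C)
    (L : ℕ) (hL : 0 < L) (Δ : Matrix (Fin L) (Fin L) ℂ)
    (hΔ : ∀ i j, ‖Δ i j‖ ≤ C) :
    ‖(1 + (L : ℂ)⁻¹ • Δ).det‖ ≤
      ∑' k : ℕ, (C * Real.sqrt k) ^ k / (Nat.factorial k : ℝ) := by
  classical
  set A : Matrix (Fin L) (Fin L) ℂ := (L : ℂ)⁻¹ • Δ with hA
  have hLpos : (0:ℝ) < L := by exact_mod_cast hL
  have hAentry : ∀ i j, ‖A i j‖ ≤ C / L := by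
    intro i j
    rw [hA]
    simp only [Matrix.smul_apply, smul_eq_mul, norm_mul, norm_inv, Complex.norm_natCast]
    rw [div_eq_inv_mul]
    exact mul_le_mul_of_nonneg_left (hΔ i j) (by positivity)
  have hexpand : (1 + A).det
      = ∑ s : Finset (Fin L), Matrix.det (s.piecewise (1 : Matrix (Fin L) (Fin L) ℂ) A) :=
    Matrix.detRowAlternating.toMultilinearMap.map_add_univ (1 : Matrix (Fin L) (Fin L) ℂ) A
  have habs : ‖(1 + A).det‖
      ≤ ∑ s : Finset (Fin L),
          ‖Matrix.det (s.piecewise (1 : Matrix (Fin L) (Fin L) ℂ) A)‖ := by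
    rw [hexpand]
    exact norm_sum_le _ _
  set H : ℕ → ℝ := fun k => (C / L * Real.sqrt k) ^ k with hH
  have hterm : ∀ s : Finset (Fin L),
      ‖Matrix.det (s.piecewise (1 : Matrix (Fin L) (Fin L) ℂ) A)‖
        ≤ H (sᶜ.card) := by
    intro s
    rw [det_piecewise_eq_minor]
    set D := A.submatrix (Subtype.val : {a : Fin L // ¬ a ∈ s} → Fin L) Subtype.val with hD
    have hcard : Fintype.card {a : Fin L // ¬ a ∈ s} = sᶜ.card := by
      simp [Fintype.card_subtype_compl, Finset.card_compl]
    set q := Fintype.equivFin {a : Fin L // ¬ a ∈ s} with hq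
    have hdet : D.det = (D.submatrix q.symm q.symm).det :=
      (Matrix.det_submatrix_equiv_self q.symm D).symm
    rw [hdet]
    have hb := hadamard_fin (Fintype.card {a : Fin L // ¬ a ∈ s}) (C / L) (by positivity)
      (D.submatrix q.symm q.symm) (fun i j => hAentry _ _)
    refine hb.trans (le_of_eq ?_)
    simp only [hH]
    rw [hcard]
  have hflip : ∑ s : Finset (Fin L), H (sᶜ.card) = ∑ s : Finset (Fin L), H (s.card) :=
    Fintype.sum_bijective compl compl_involutive.bijective _ _
      (fun s => rfl)
  have hgroup : ∑ s : Finset (Fin L), H (s.card)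
      = ∑ k ∈ Finset.range (L+1), (L.choose k) • H k := by
    rw [← Finset.powerset_univ, Finset.sum_powerset_apply_card]
    simp [Finset.card_univ]
  have hfinal : ∀ k ∈ Finset.range (L+1),
      (L.choose k) • H k ≤ (C * Real.sqrt k) ^ k / (Nat.factorial k : ℝ) := by
    intro k _
    simp only [hH, nsmul_eq_mul]
    have h1 : (C / L * Real.sqrt k) ^ k = (C * Real.sqrt k) ^ k / (L:ℝ)^k := by
      rw [← div_pow]
      congr 1
      field_simp
    rw [h1]
    have hfact : (L.choose k : ℝ) * (Nat.factorial k : ℝ) ≤ (L:ℝ)^k := by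
      have h0 := Nat.descFactorial_le_pow L k
      rw [Nat.descFactorial_eq_factorial_mul_choose] at h0
      calc (L.choose k : ℝ) * (Nat.factorial k : ℝ)
          = ((Nat.factorial k * L.choose k : ℕ) : ℝ) := by push_cast; ring
        _ ≤ ((L ^ k : ℕ) : ℝ) := by exact_mod_cast h0
        _ = (L:ℝ)^k := by push_cast; ring
    have hLk : (0:ℝ) < (L:ℝ)^k := by positivity
    have hkf : (0:ℝ) < (Nat.factorial k : ℝ) := by exact_mod_cast k.factorial_pos
    rw [mul_comm, div_mul_eq_mul_div, div_le_div_iff₀ hLk hkf]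
    calc (C * Real.sqrt k) ^ k * (L.choose k) * (Nat.factorial k : ℝ)
        = (C * Real.sqrt k) ^ k * ((L.choose k : ℝ) * (Nat.factorial k : ℝ)) := by ring
      _ ≤ (C * Real.sqrt k) ^ k * (L:ℝ)^k := by
          apply mul_le_mul_of_nonneg_left hfact (by positivity)
      _ = (C * Real.sqrt k) ^ k * (L:ℝ)^k := rfl
  calc ‖(1 + A).det‖
      ≤ ∑ s : Finset (Fin L),
          ‖Matrix.det (s.piecewise (1 : Matrix (Fin L) (Fin L) ℂ) A)‖ := habs
    _ ≤ ∑ s : Finset (Fin L), H (sᶜ.card) := Finset.sum_le_sum (fun s _ => hterm s)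
    _ = ∑ k ∈ Finset.range (L+1), (L.choose k) • H k := by rw [hflip, hgroup]
    _ ≤ ∑ k ∈ Finset.range (L+1), (C * Real.sqrt k) ^ k / (Nat.factorial k : ℝ) :=
        Finset.sum_le_sum hfinal
    _ ≤ ∑' k : ℕ, (C * Real.sqrt k) ^ k / (Nat.factorial k : ℝ) := by
        apply Summable.sum_le_tsum _ (fun k _ => by positivity) (summable_term C hC)
end

section
/- Let Δ be an L×L complex matrix with all entries bounded by a constant C, and suppose det(I + (1/L)Δ) ≥ α > 0 where α is independent of L. Then (I + (1/L)Δ)^{-1} = I + (1/L)G, where all entries of G are bounded by a constant C'' depending only on C and α (not on L). -/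
open scoped BigOperators
open Matrix Finset
open scoped ComplexOrder

private lemma amgm {n : ℕ} (f : Fin n → ℝ) (hf : ∀ i, 0 ≤ f i) :
    ∏ i, f i ≤ ((∑ i, f i) / n) ^ n := by
  rcases Nat.eq_zero_or_pos n with h | h
  · subst h; simp
  have hn : (0:ℝ) < n := by exact_mod_cast h
  have key := Real.geom_mean_le_arith_mean_weighted Finset.univ
      (fun _ : Fin n => (n : ℝ)⁻¹) f (fun i _ => by positivity)
      (by rw [Finset.sum_const, Finset.card_univ, Fintype.card_fin, nsmul_eq_mul,
        mul_inv_cancel₀ hn.ne']) (fun i _ => hf i)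
  have h1 : ∏ i, (f i) ^ ((n:ℝ)⁻¹) = (∏ i, f i) ^ ((n:ℝ)⁻¹) :=
    Real.finset_prod_rpow _ _ (fun i _ => hf i) _
  have h2 : ∑ i : Fin n, (n:ℝ)⁻¹ * f i = (∑ i, f i) / n := by
    rw [← Finset.mul_sum]; ring
  rw [h1, h2] at key
  have h3 : (0:ℝ) ≤ (∏ i, f i) := Finset.prod_nonneg fun i _ => hf i
  calc ∏ i, f i = ((∏ i, f i) ^ ((n:ℝ)⁻¹)) ^ (n:ℕ) := by
        rw [← Real.rpow_natCast ((∏ i, f i) ^ ((n:ℝ)⁻¹)) n, ← Real.rpow_mul h3,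
          inv_mul_cancel₀ hn.ne', Real.rpow_one]
    _ ≤ ((∑ i, f i) / n) ^ n := pow_le_pow_left₀ (Real.rpow_nonneg h3 _) key n

private lemma cs_bound {n : ℕ} (u v : Fin n → ℂ) :
    ‖u ⬝ᵥ v‖ ^ 2 ≤ (∑ i, Complex.normSq (u i)) * (∑ i, Complex.normSq (v i)) := by
  have h1 : ‖u ⬝ᵥ v‖ ≤ ∑ i, ‖u i‖ * ‖v i‖ := by
    simp only [dotProduct]
    refine (norm_sum_le _ _).trans_eq ?_
    simp [norm_mul]
  have h2 := Finset.sum_mul_sq_le_sq_mul_sq Finset.univ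
    (fun i => ‖u i‖) (fun i => ‖v i‖)
  calc ‖u ⬝ᵥ v‖ ^ 2 ≤ (∑ i, ‖u i‖ * ‖v i‖) ^ 2 :=
        pow_le_pow_left₀ (norm_nonneg _) h1 2
    _ ≤ (∑ i, ‖u i‖ ^ 2) * (∑ i, ‖v i‖ ^ 2) := h2
    _ = (∑ i, Complex.normSq (u i)) * (∑ i, Complex.normSq (v i)) := by
        simp [Complex.sq_norm]

private lemma trace_eq_sum_eigen {n : Type*} [Fintype n] [DecidableEq n]
    {P : Matrix n n ℂ} (hP : P.IsHermitian) :
    P.trace = ∑ i, (hP.eigenvalues i : ℂ) := by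
  exact hP.trace_eq_sum_eigenvalues


private lemma key_bound {L : ℕ} (hL : 0 < L) (A : Matrix (Fin L) (Fin L) ℂ) {r : ℝ}
    (hr0 : 0 < r) (hdet : A.det = (r : ℂ)) {F : ℝ}
    (hF : ∑ i, ∑ j, Complex.normSq (A i j) ≤ F)
    (x : Fin L → ℂ) (hx : ∑ i, Complex.normSq (x i) ≤ 1) :
    ∑ i, Complex.normSq ((A⁻¹ *ᵥ x) i) ≤ ((F + 1) / L) ^ L / r ^ 2 := by
  have hA : IsUnit A.det := by
    rw [hdet]; simp [isUnit_iff_ne_zero, Complex.ofReal_ne_zero, hr0.ne']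
  set y := A⁻¹ *ᵥ x with hy
  have hxy : A *ᵥ y = x := by
    rw [hy, Matrix.mulVec_mulVec, Matrix.mul_nonsing_inv _ hA, Matrix.one_mulVec]
  set P := A * Aᴴ + replicateCol Unit x * replicateRow Unit (star x) with hP
  have hxx : (replicateCol Unit x * replicateRow Unit (star x)) = (replicateCol Unit x) * (replicateCol Unit x)ᴴ := by
    rw [Matrix.conjTranspose_replicateCol]
  have hPsd : P.PosSemidef := by
    refine (Matrix.posSemidef_self_mul_conjTranspose A).add ?_
    rw [hxx]; exact Matrix.posSemidef_self_mul_conjTranspose _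
  -- factorization
  have hfact : P = A * ((1 : Matrix (Fin L) (Fin L) ℂ) + replicateCol Unit y * replicateRow Unit (star y)) * Aᴴ := by
    rw [Matrix.mul_add, Matrix.mul_one, Matrix.add_mul]
    congr 1
    have h1 : A * (replicateCol Unit y * replicateRow Unit (star y)) = replicateCol Unit x * replicateRow Unit (star y) := by
      rw [← Matrix.mul_assoc, ← Matrix.replicateCol_mulVec, hxy]
    rw [h1, Matrix.mul_assoc]
    congr 1
    have h2 : replicateRow Unit (star y) * Aᴴ = (A * replicateCol Unit y)ᴴ := by
      rw [Matrix.conjTranspose_mul, Matrix.conjTranspose_replicateCol]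
    rw [h2, ← Matrix.replicateCol_mulVec, hxy, Matrix.conjTranspose_replicateCol]
  set sy := ∑ i, Complex.normSq (y i) with hsy
  have hsynn : 0 ≤ sy := Finset.sum_nonneg fun i _ => Complex.normSq_nonneg _
  have hdot : (star y) ⬝ᵥ y = ((sy : ℝ) : ℂ) := by
    simp only [dotProduct, hsy, Pi.star_apply, Complex.ofReal_sum]
    exact Finset.sum_congr rfl fun i _ => (Complex.normSq_eq_conj_mul_self).symm ▸ rfl
  have hdetP : P.det = (((r ^ 2 * (1 + sy) : ℝ)) : ℂ) := by
    rw [hfact, Matrix.det_mul, Matrix.det_mul, Matrix.det_one_add_replicateCol_mul_replicateRow, hdot,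
      Matrix.det_conjTranspose, hdet]
    push_cast
    rw [Complex.star_def, Complex.conj_ofReal]
    ring
  have hμnn : ∀ i, 0 ≤ hPsd.1.eigenvalues i := hPsd.eigenvalues_nonneg
  have hprod : r ^ 2 * (1 + sy) = ∏ i, hPsd.1.eigenvalues i := by
    have h := hPsd.1.det_eq_prod_eigenvalues
    rw [hdetP] at h
    have h3 : ((r ^ 2 * (1 + sy) : ℝ) : ℂ) = ((∏ i, hPsd.1.eigenvalues i : ℝ) : ℂ) := by
      rw [h]; norm_cast
    exact_mod_cast h3
  have hFnn : 0 ≤ ∑ i, ∑ j, Complex.normSq (A i j) :=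
    Finset.sum_nonneg fun i _ => Finset.sum_nonneg fun j _ => Complex.normSq_nonneg _
  have hsum : ∑ i, hPsd.1.eigenvalues i ≤ F + 1 := by
    have htr : P.trace =
        (((∑ i, ∑ j, Complex.normSq (A i j)) + ∑ i, Complex.normSq (x i) : ℝ) : ℂ) := by
      simp only [hP, Matrix.trace, Matrix.diag, Matrix.add_apply, Matrix.mul_apply,
        Matrix.conjTranspose_apply, Matrix.replicateCol_apply, Matrix.replicateRow_apply, Pi.star_apply,
        Finset.sum_add_distrib]
      push_cast
      congr 1
      · refine Finset.sum_congr rfl fun i _ => Finset.sum_congr rfl fun j _ => ?_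
        rw [Complex.star_def, Complex.mul_conj]
      · simp only [Finset.univ_unique, Finset.sum_const, Finset.card_singleton, one_smul]
        refine Finset.sum_congr rfl fun i _ => ?_
        rw [Complex.star_def, Complex.mul_conj]
    have htr2 := trace_eq_sum_eigen hPsd.1
    rw [htr] at htr2
    have : (∑ i, ∑ j, Complex.normSq (A i j)) + ∑ i, Complex.normSq (x i) = ∑ i, hPsd.1.eigenvalues i := by
      exact_mod_cast htr2
    linarith
  have hμsumnn : 0 ≤ ∑ i, hPsd.1.eigenvalues i := Finset.sum_nonneg fun i _ => hμnn i
  have hL' : (0:ℝ) < L := by exact_mod_cast hL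
  have hamgm : ∏ i, hPsd.1.eigenvalues i ≤ ((F + 1) / L) ^ L := by
    calc ∏ i, hPsd.1.eigenvalues i ≤ ((∑ i, hPsd.1.eigenvalues i) / L) ^ L := by
          have := amgm hPsd.1.eigenvalues hμnn
          simpa using this
      _ ≤ ((F + 1) / L) ^ L := by
          refine pow_le_pow_left₀ (by positivity) ?_ L
          gcongr
  have hfin : r ^ 2 * sy ≤ ((F + 1) / L) ^ L := by
    nlinarith [hprod, hamgm, hsynn, sq_nonneg r]
  rw [mul_comm] at hfin
  exact (le_div_iff₀ (by positivity : (0:ℝ) < r ^ 2)).mpr hfin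
private lemma key_scaled {L : ℕ} (hL : 0 < L) (A : Matrix (Fin L) (Fin L) ℂ) {r : ℝ}
    (hr0 : 0 < r) (hdet : A.det = (r : ℂ)) {F : ℝ}
    (hF : ∑ i, ∑ j, Complex.normSq (A i j) ≤ F) (v : Fin L → ℂ) :
    ∑ i, Complex.normSq ((A⁻¹ *ᵥ v) i) ≤
      ((F + 1) / L) ^ L / r ^ 2 * ∑ i, Complex.normSq (v i) := by
  have hFnn : 0 ≤ ∑ i, ∑ j, Complex.normSq (A i j) :=
    Finset.sum_nonneg fun i _ => Finset.sum_nonneg fun j _ => Complex.normSq_nonneg _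
  have hL' : (0:ℝ) < L := by exact_mod_cast hL
  by_cases hv : v = 0
  · simp [hv, Matrix.mulVec_zero]
  · have hpos : 0 < ∑ i, Complex.normSq (v i) := by
      rcases (Finset.sum_nonneg fun i (_ : i ∈ Finset.univ) =>
        Complex.normSq_nonneg (v i)).lt_or_eq with h | h
      · exact h
      · exfalso; apply hv; funext i
        have := (Finset.sum_eq_zero_iff_of_nonneg
          (fun i (_ : i ∈ Finset.univ) => Complex.normSq_nonneg (v i))).mp h.symm
        exact Complex.normSq_eq_zero.mp (this i (Finset.mem_univ i))
    set t : ℝ := Real.sqrt (∑ i, Complex.normSq (v i)) with htdef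
    have ht : 0 < t := Real.sqrt_pos.mpr hpos
    have htt : t * t = ∑ i, Complex.normSq (v i) := Real.mul_self_sqrt hpos.le
    set x : Fin L → ℂ := ((t : ℂ))⁻¹ • v with hxdef
    have hx1 : ∑ i, Complex.normSq (x i) = 1 := by
      simp only [hxdef, Pi.smul_apply, smul_eq_mul, Complex.normSq_mul,
        ← Complex.ofReal_inv, Complex.normSq_ofReal, ← Finset.mul_sum]
      field_simp
      linarith [htt]
    have hAx : A⁻¹ *ᵥ v = (t : ℂ) • (A⁻¹ *ᵥ x) := by
      rw [← Matrix.mulVec_smul]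
      congr 1
      rw [hxdef, smul_smul, mul_inv_cancel₀ (by exact_mod_cast ht.ne'), one_smul]
    have hkey := key_bound hL A hr0 hdet hF x hx1.le
    calc ∑ i, Complex.normSq ((A⁻¹ *ᵥ v) i)
        = (t * t) * ∑ i, Complex.normSq ((A⁻¹ *ᵥ x) i) := by
          rw [hAx]
          simp only [Pi.smul_apply, smul_eq_mul, Complex.normSq_mul,
            Complex.normSq_ofReal, ← Finset.mul_sum]
      _ ≤ (t * t) * (((F + 1) / L) ^ L / r ^ 2) := by
          exact mul_le_mul_of_nonneg_left hkey (by positivity)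
      _ = ((F + 1) / L) ^ L / r ^ 2 * ∑ i, Complex.normSq (v i) := by
          rw [htt]; ring
/-- If all entries of the `L × L` matrix `Δ` are bounded by `C` and the
determinant of `1 + (1/L) Δ` is a real number bounded below by `α > 0`
(both `C` and `α` independent of `L`), then `(1 + (1/L) Δ)⁻¹ = 1 + (1/L) G`
where all entries of `G` are bounded by a constant depending only on
`C` and `α`. -/
theorem inv_one_add_inv_smul_entries_bounded (C α : ℝ) (hC : 0 ≤ C) (hα : 0 < α) :
    ∃ C'' : ℝ, ∀ (L : ℕ) (_ : 0 < L) (Δ : Matrix (Fin L) (Fin L) ℂ),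
      (∀ i j, ‖Δ i j‖ ≤ C) →
      (1 + (L : ℂ)⁻¹ • Δ).det.im = 0 →
      α ≤ (1 + (L : ℂ)⁻¹ • Δ).det.re →
      ∃ G : Matrix (Fin L) (Fin L) ℂ,
        (1 + (L : ℂ)⁻¹ • Δ)⁻¹ = 1 + (L : ℂ)⁻¹ • G ∧
        ∀ i j, ‖G i j‖ ≤ C'' := by
  classical
  set K : ℝ := 2 * C + C * C with hK
  have hKnn : 0 ≤ K := by nlinarith
  refine ⟨C + Real.sqrt (C ^ 2 * C ^ 2 * (Real.exp (K + 1) / α ^ 2)), ?_⟩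
  intro L hL Δ hΔ him hre
  set A := 1 + (L : ℂ)⁻¹ • Δ with hAdef
  have hL' : (0:ℝ) < L := by exact_mod_cast hL
  set r := A.det.re with hr
  have hr0 : 0 < r := lt_of_lt_of_le hα hre
  have hdet : A.det = (r : ℂ) := by
    apply Complex.ext
    · simp [hr]
    · simp [him]
  have hA : IsUnit A.det := by
    rw [hdet]; simp [isUnit_iff_ne_zero, Complex.ofReal_ne_zero, hr0.ne']
  -- entry bounds for A
  have habsinv : ‖(L:ℂ)⁻¹‖ = (L:ℝ)⁻¹ := by
    rw [norm_inv, Complex.norm_natCast]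
  have habs : ∀ i j : Fin L, ‖A i j‖ ≤ (if j = i then 1 + C / L else C / L) := by
    intro i j
    have hAij : A i j = (if j = i then (1:ℂ) else 0) + (L:ℂ)⁻¹ * Δ i j := by
      rw [hAdef]
      simp [Matrix.add_apply, Matrix.one_apply, eq_comm]
    rw [hAij]
    refine le_trans (norm_add_le _ _) ?_
    have h2 : ‖(L:ℂ)⁻¹ * Δ i j‖ ≤ C / L := by
      rw [norm_mul, habsinv, div_eq_inv_mul]
      exact mul_le_mul_of_nonneg_left (hΔ i j) (by positivity)
    by_cases h : j = i
    · subst h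
      rw [if_pos rfl, if_pos rfl, norm_one]
      linarith
    · simp only [if_neg h, norm_zero]
      linarith
  have hrow : ∀ i, ∑ j, Complex.normSq (A i j) ≤ 1 + K / L := by
    intro i
    have hterm : ∀ j, Complex.normSq (A i j) ≤
        (if j = i then (1 + C / L) ^ 2 else (C / L) ^ 2) := by
      intro j
      rw [← Complex.sq_norm]
      by_cases h : j = i
      · subst h
        rw [if_pos rfl]
        have := habs j j
        rw [if_pos rfl] at this
        exact pow_le_pow_left₀ (norm_nonneg _) this 2
      · rw [if_neg h]
        have := habs i j
        rw [if_neg h] at this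
        exact pow_le_pow_left₀ (norm_nonneg _) this 2
    calc ∑ j, Complex.normSq (A i j)
        ≤ ∑ j, (if j = i then (1 + C / L) ^ 2 else (C / L) ^ 2) :=
          Finset.sum_le_sum fun j _ => hterm j
      _ = ∑ j : Fin L, ((C / L) ^ 2 + (if j = i then (1 + C / L) ^ 2 - (C / L) ^ 2 else 0)) := by
          refine Finset.sum_congr rfl fun j _ => ?_
          split <;> ring
      _ = L * (C / L) ^ 2 + ((1 + C / L) ^ 2 - (C / L) ^ 2) := by
          rw [Finset.sum_add_distrib, Finset.sum_const, Finset.card_univ, Fintype.card_fin,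
            Finset.sum_ite_eq' Finset.univ i, if_pos (Finset.mem_univ i), nsmul_eq_mul]
      _ = 1 + K / L := by
          field_simp
          ring
  have hF : ∑ i, ∑ j, Complex.normSq (A i j) ≤ L + K := by
    calc ∑ i, ∑ j, Complex.normSq (A i j) ≤ ∑ _i : Fin L, (1 + K / L) :=
          Finset.sum_le_sum fun i _ => hrow i
      _ = L * (1 + K / L) := by
          rw [Finset.sum_const, Finset.card_univ, Fintype.card_fin, nsmul_eq_mul]
      _ = L + K := by field_simp
  -- the bound on the inverse coefficient
  have hBle : ((L + K + 1) / L) ^ L / r ^ 2 ≤ Real.exp (K + 1) / α ^ 2 := by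
    have h1 : ((L:ℝ) + K + 1) / L ≤ Real.exp ((K + 1) / L) := by
      have h := Real.add_one_le_exp ((K + 1) / L)
      have heq : ((L:ℝ) + K + 1) / L = (K + 1) / L + 1 := by field_simp; ring
      rw [heq]; exact h
    have h2 : (((L:ℝ) + K + 1) / L) ^ L ≤ Real.exp (K + 1) := by
      calc (((L:ℝ) + K + 1) / L) ^ L ≤ (Real.exp ((K + 1) / L)) ^ L :=
            pow_le_pow_left₀ (by positivity) h1 L
        _ = Real.exp ((K + 1) / L * L) := by
            rw [← Real.exp_nat_mul]
            congr 1
            ring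
        _ = Real.exp (K + 1) := by
            congr 1
            field_simp
    have hra : α ^ 2 ≤ r ^ 2 := pow_le_pow_left₀ hα.le hre 2
    exact div_le_div₀ (Real.exp_nonneg _) h2 (by positivity) hra
  refine ⟨-(Δ * A⁻¹), ?_, ?_⟩
  · have h1 : A * A⁻¹ = 1 := Matrix.mul_nonsing_inv _ hA
    have h2 : A⁻¹ + (L:ℂ)⁻¹ • (Δ * A⁻¹) = 1 := by
      rw [← h1]
      nth_rewrite 3 [hAdef]
      rw [Matrix.add_mul, Matrix.one_mul, Matrix.smul_mul]
    rw [smul_neg, ← sub_eq_add_neg]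
    exact eq_sub_of_add_eq h2
  · intro i j
    have h2' : A⁻¹ * A = 1 := Matrix.nonsing_inv_mul _ hA
    have h4 : A⁻¹ = 1 - (L:ℂ)⁻¹ • (A⁻¹ * Δ) := by
      apply eq_sub_of_add_eq
      rw [← h2']
      nth_rewrite 3 [hAdef]
      rw [Matrix.mul_add, Matrix.mul_one, Matrix.mul_smul]
    have hG : -(Δ * A⁻¹) = -Δ + (L:ℂ)⁻¹ • (Δ * (A⁻¹ * Δ)) := by
      conv_lhs => rw [h4]
      rw [Matrix.mul_sub, Matrix.mul_one, Matrix.mul_smul, neg_sub, sub_eq_neg_add]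
    have hGij : (-(Δ * A⁻¹)) i j = -(Δ i j) + (L:ℂ)⁻¹ * ((Δ * (A⁻¹ * Δ)) i j) := by
      rw [hG]
      simp [Matrix.add_apply, Matrix.neg_apply, Matrix.smul_apply, smul_eq_mul]
    rw [hGij]
    set u : Fin L → ℂ := fun k => Δ i k with hu
    set v : Fin L → ℂ := fun l => Δ l j with hv
    have hentry : (Δ * (A⁻¹ * Δ)) i j = u ⬝ᵥ (A⁻¹ *ᵥ v) := by
      simp only [Matrix.mul_apply, Matrix.mulVec, dotProduct, hu, hv]
    have hSu : ∑ k, Complex.normSq (u k) ≤ L * C ^ 2 := by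
      calc ∑ k, Complex.normSq (u k) ≤ ∑ _k : Fin L, C ^ 2 := by
            refine Finset.sum_le_sum fun k _ => ?_
            rw [← Complex.sq_norm]
            exact pow_le_pow_left₀ (norm_nonneg _) (hΔ i k) 2
        _ = L * C ^ 2 := by
            rw [Finset.sum_const, Finset.card_univ, Fintype.card_fin, nsmul_eq_mul]
    have hSv : ∑ k, Complex.normSq (v k) ≤ L * C ^ 2 := by
      calc ∑ k, Complex.normSq (v k) ≤ ∑ _k : Fin L, C ^ 2 := by
            refine Finset.sum_le_sum fun k _ => ?_
            rw [← Complex.sq_norm]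
            exact pow_le_pow_left₀ (norm_nonneg _) (hΔ k j) 2
        _ = L * C ^ 2 := by
            rw [Finset.sum_const, Finset.card_univ, Fintype.card_fin, nsmul_eq_mul]
    have hSz := key_scaled hL A hr0 hdet hF v
    have hSz' : ∑ i', Complex.normSq ((A⁻¹ *ᵥ v) i') ≤
        Real.exp (K + 1) / α ^ 2 * (L * C ^ 2) := by
      refine le_trans hSz ?_
      have h5 : ((L:ℝ) + K + 1) / L = ((L + K) + 1) / L := by ring_nf
      exact mul_le_mul hBle hSv (Finset.sum_nonneg fun k _ => Complex.normSq_nonneg _)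
        (by positivity)
    have hcs := cs_bound u (A⁻¹ *ᵥ v)
    have habs2 : ‖u ⬝ᵥ (A⁻¹ *ᵥ v)‖ ^ 2 ≤
        (L * C ^ 2) * (Real.exp (K + 1) / α ^ 2 * (L * C ^ 2)) := by
      refine le_trans hcs (mul_le_mul hSu hSz'
        (Finset.sum_nonneg fun k _ => Complex.normSq_nonneg _) (by positivity))
    have hterm : ‖(L:ℂ)⁻¹ * (u ⬝ᵥ (A⁻¹ *ᵥ v))‖ ≤
        Real.sqrt (C ^ 2 * C ^ 2 * (Real.exp (K + 1) / α ^ 2)) := by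
      rw [norm_mul, habsinv]
      have hnn : 0 ≤ (L:ℝ)⁻¹ * ‖u ⬝ᵥ (A⁻¹ *ᵥ v)‖ := by positivity
      have hsq : ((L:ℝ)⁻¹ * ‖u ⬝ᵥ (A⁻¹ *ᵥ v)‖) ^ 2 ≤
          C ^ 2 * C ^ 2 * (Real.exp (K + 1) / α ^ 2) := by
        have heq : ((L:ℝ)⁻¹) ^ 2 * ((L * C ^ 2) * (Real.exp (K + 1) / α ^ 2 * (L * C ^ 2)))
            = C ^ 2 * C ^ 2 * (Real.exp (K + 1) / α ^ 2) := by
          field_simp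
        calc ((L:ℝ)⁻¹ * ‖u ⬝ᵥ (A⁻¹ *ᵥ v)‖) ^ 2
            = ((L:ℝ)⁻¹) ^ 2 * ‖u ⬝ᵥ (A⁻¹ *ᵥ v)‖ ^ 2 := by ring
          _ ≤ ((L:ℝ)⁻¹) ^ 2 * ((L * C ^ 2) * (Real.exp (K + 1) / α ^ 2 * (L * C ^ 2))) :=
              mul_le_mul_of_nonneg_left habs2 (by positivity)
          _ = C ^ 2 * C ^ 2 * (Real.exp (K + 1) / α ^ 2) := heq
      have := Real.sqrt_le_sqrt hsq
      rwa [Real.sqrt_sq hnn] at this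
    rw [hentry]
    refine le_trans (norm_add_le _ _) ?_
    refine add_le_add ?_ hterm
    rw [norm_neg]
    exact hΔ i j
end

section
/- For the 2×2 real matrix M with entries M₁₁ = 1 + β⁺(2 + β⁺ − β⁻), M₁₂ = β⁻(β⁺ − β⁻), M₂₁ = β⁺(β⁻ − β⁺), M₂₂ = 1 + β⁻(2 + β⁻ − β⁺), where β± = (ω/2)(−1 ± 2d/(m²+2d)) with m > 0, d ≥ 1 and 0 < ω < 2, the (0,0) entry of (I − M)^{-1} equals (β⁺ − β⁻ − 2)/(4β⁺). -/
/-! With `δ = β⁺ - β⁻`, the columns of `I - M` are `-β⁺ (2 + δ, -δ)` and `-β⁻ (δ, 2 - δ)`,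
and `det [[2 + δ, δ], [-δ, 2 - δ]] = 4`; so `det (I - M) = 4 β⁺ β⁻` and the adjugate formula
gives the entry, the factor `β⁻` cancelling. Both `β±` are nonzero because `0 < 2d/(m² + 2d) < 1`. -/

namespace Matrix

variable {K : Type*} [Field K]

def evenOddMatrix (a b : K) : Matrix (Fin 2) (Fin 2) K :=
  !![1 + a * (2 + a - b), b * (a - b);
     a * (b - a), 1 + b * (2 + b - a)]

theorem one_sub_evenOddMatrix (a b : K) :
    1 - evenOddMatrix a b =
      !![-(a * (2 + a - b)), -(b * (a - b));
         -(a * (b - a)), -(b * (2 + b - a))] := by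
  rw [evenOddMatrix, one_fin_two, of_sub_of]
  congr 1
  ext i j
  fin_cases i <;> fin_cases j <;> simp

theorem det_one_sub_evenOddMatrix (a b : K) : (1 - evenOddMatrix a b).det = 4 * a * b := by
  rw [one_sub_evenOddMatrix, det_fin_two_of]
  ring

theorem inv_one_sub_evenOddMatrix_zero_zero {a b : K} (hb : b ≠ 0) :
    (1 - evenOddMatrix a b)⁻¹ 0 0 = (a - b - 2) / (4 * a) := by
  rw [inv_def, det_one_sub_evenOddMatrix, one_sub_evenOddMatrix, adjugate_fin_two_of,
    Ring.inverse_eq_inv']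
  simp only [smul_apply, of_apply, cons_val', cons_val_zero, empty_val', cons_val_fin_one,
    smul_eq_mul]
  rw [mul_inv, mul_neg, ← mul_assoc, inv_mul_cancel_right₀ hb]
  ring

end Matrix

open Matrix in
theorem even_odd_inv_entry_general (m ω : ℝ) (d : ℕ) (hm : 0 < m)
    (hω0 : 0 < ω) :
    let βp : ℝ := ω / 2 * (-1 + 2 * d / (m ^ 2 + 2 * d))
    let βm : ℝ := ω / 2 * (-1 - 2 * d / (m ^ 2 + 2 * d))
    let M : Matrix (Fin 2) (Fin 2) ℝ :=
      !![1 + βp * (2 + βp - βm), βm * (βp - βm);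
         βp * (βm - βp), 1 + βm * (2 + βm - βp)]
    IsUnit (1 - M).det ∧ (1 - M)⁻¹ 0 0 = (βp - βm - 2) / (4 * βp) := by
  intro βp βm M
  have hs_nonneg : 0 ≤ 2 * (d : ℝ) / (m ^ 2 + 2 * d) := by positivity
  have hs_lt_one : 2 * (d : ℝ) / (m ^ 2 + 2 * d) < 1 := by
    rw [div_lt_one (by positivity)]
    linarith [pow_pos hm 2]
  have hβp : βp ≠ 0 := mul_ne_zero (by positivity) (by linarith)
  have hβm : βm ≠ 0 := mul_ne_zero (by positivity) (by linarith)
  change IsUnit (1 - evenOddMatrix βp βm).det ∧ (1 - evenOddMatrix βp βm)⁻¹ 0 0 = _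
  rw [det_one_sub_evenOddMatrix, isUnit_iff_ne_zero]
  exact ⟨by positivity, inv_one_sub_evenOddMatrix_zero_zero hβm⟩

/-- For the even/odd update matrix `M` built from
`β± = (ω/2)(−1 ± 2d/(m²+2d))`, the matrix `I - M` is invertible and
`((I - M)⁻¹)_{0,0} = (β⁺ - β⁻ - 2) / (4 β⁺)`. -/
theorem even_odd_inv_entry (m ω : ℝ) (d : ℕ) (hm : 0 < m) (hd : 1 ≤ d)
    (hω0 : 0 < ω) (hω2 : ω < 2) :
    let βp : ℝ := ω / 2 * (-1 + 2 * d / (m ^ 2 + 2 * d))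
    let βm : ℝ := ω / 2 * (-1 - 2 * d / (m ^ 2 + 2 * d))
    let M : Matrix (Fin 2) (Fin 2) ℝ :=
      !![1 + βp * (2 + βp - βm), βm * (βp - βm);
         βp * (βm - βp), 1 + βm * (2 + βm - βp)]
    IsUnit (1 - M).det ∧ (1 - M)⁻¹ 0 0 = (βp - βm - 2) / (4 * βp) :=
  even_odd_inv_entry_general m ω d hm hω0
end
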